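/- arXiv:2309.05482 — 2 statements merged into one kernel-verified Lean document; each statement's English description precedes it below -/
import Mathlib

section
/- Let T : S_n × S_n → ℝ be a function of two permutation arguments (with fixed additional data) satisfying the transferability condition: T(π_1, π_2; ε_σ) = T(π_1 ∘ σ⁻¹, π_2 ∘ σ⁻¹; ε) for all permutations π_1, π_2, σ, where ε ∈ ℝ^n and ε_σ denotes the vector ε permuted by σ. Let π_0 be the identity and π_1, ..., π_B be independent uniformly random permutations, and suppose ε has exchangeable coordinates. Define T_{0b} = T(π_0, π_b; ε), T_{b0} = T(π_b, π_0; ε), ω_b = 1 if T_{b0} > T_{0b}, ω_b = 1/2 if T_{b0} = T_{0b}, ω_b = 0 otherwise, and p = (1 + Σ_{b=1}^B ω_b)/(B+1). Then for every α > 0, P(p ≤ α) < 2α. -/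
/-!
Put `π₀ = 1` and let `p_k` be the p-value computed with `π_k` in the role of the identity, so
that `p = p₀`. Transferability and exchangeability make the relabelling that moves `π_k` to the
identity measure-preserving, so every `p_k` has the law of `p`. On the other hand the weights `ω`
form a tournament on `π₀, …, π_B`: the `m` players with `p_k ≤ α` share `m² / 2` points among
themselves, which forces `m ≤ 2 (B + 1) α - 1` as soon as `m > 0`. Taking expectations,
`(B + 1) P(p ≤ α) ≤ max 0 (2 (B + 1) α - 1) < 2 (B + 1) α`.
-/

open MeasureTheory Finset Equiv
open scoped ENNReal

instance permMeasurableSpace (n : ℕ) : MeasurableSpace (Equiv.Perm (Fin n)) := ⊤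

instance (n : ℕ) : DiscreteMeasurableSpace (Perm (Fin n)) :=
  ⟨fun _ => MeasurableSpace.measurableSet_top⟩

noncomputable def cmpWeight (a b : ℝ) : ℝ := if a > b then 1 else if a = b then 1 / 2 else 0

lemma cmpWeight_nonneg (a b : ℝ) : 0 ≤ cmpWeight a b := by
  unfold cmpWeight; split_ifs <;> norm_num

lemma cmpWeight_add_swap (a b : ℝ) : cmpWeight a b + cmpWeight b a = 1 := by
  unfold cmpWeight
  rcases lt_trichotomy a b with h | rfl | h
  · simp [h, h.ne, not_lt_of_gt h]
  · norm_num
  · simp [h, h.ne, not_lt_of_gt h]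

lemma cmpWeight_self (a : ℝ) : cmpWeight a a = 1 / 2 := by
  linarith [cmpWeight_add_swap a a]

lemma Measurable.cmpWeight {Ω : Type*} [MeasurableSpace Ω] {f g : Ω → ℝ} (hf : Measurable f)
    (hg : Measurable g) : Measurable fun x => _root_.cmpWeight (f x) (g x) :=
  Measurable.ite (measurableSet_lt hg hf) measurable_const
    (Measurable.ite (measurableSet_eq_fun hf hg) measurable_const measurable_const)

theorem card_filter_half_add_sum_le {ι : Type*} [Fintype ι] (ω : ι → ι → ℝ)
    (hω : ∀ i j, 0 ≤ ω i j) (hω_swap : ∀ i j, ω i j + ω j i = 1) (c : ℝ) :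
    (#{i | 1 / 2 + ∑ j, ω i j ≤ c} : ℝ) ≤ max 0 (2 * c - 1) := by
  classical
  set M : Finset ι := {i | 1 / 2 + ∑ j, ω i j ≤ c}
  have hwithin : 2 * ∑ i ∈ M, ∑ j ∈ M, ω i j = #M * #M := by
    calc 2 * ∑ i ∈ M, ∑ j ∈ M, ω i j
        = ∑ i ∈ M, ∑ j ∈ M, ω i j + ∑ i ∈ M, ∑ j ∈ M, ω j i := by
          rw [sum_comm (f := fun j i => ω i j)]; ring
      _ = ∑ i ∈ M, ∑ j ∈ M, (ω i j + ω j i) := by simp only [sum_add_distrib]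
      _ = #M * #M := by simp [hω_swap]
  have hscore : ∑ i ∈ M, ∑ j ∈ M, ω i j ≤ #M * (c - 1 / 2) := by
    calc ∑ i ∈ M, ∑ j ∈ M, ω i j
        ≤ ∑ i ∈ M, ∑ j, ω i j :=
          sum_le_sum fun i _ => sum_le_sum_of_subset_of_nonneg (subset_univ M) fun j _ _ => hω i j
      _ ≤ ∑ _i ∈ M, (c - 1 / 2) :=
          sum_le_sum fun i hi => by linarith [(mem_filter.1 hi).2]
      _ = #M * (c - 1 / 2) := by rw [sum_const, nsmul_eq_mul]
  rcases (#M).eq_zero_or_pos with h0 | hpos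
  · simp [h0]
  · refine le_max_of_le_right (le_of_mul_le_mul_left ?_ (Nat.cast_pos.2 hpos))
    linarith

open scoped Classical in
lemma sum_measure_le_of_card_mem_le {Ω ι : Type*} [MeasurableSpace Ω] [Fintype ι]
    {μ : Measure Ω} [IsProbabilityMeasure μ] {E : ι → Set Ω} (hE : ∀ i, MeasurableSet (E i))
    {K : ℝ≥0∞} (hK : ∀ x, (#{i | x ∈ E i} : ℝ≥0∞) ≤ K) :
    ∑ i, μ (E i) ≤ K := by
  calc ∑ i, μ (E i) = ∫⁻ x, ∑ i, (E i).indicator 1 x ∂μ := by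
        rw [lintegral_finsetSum _ fun i _ => measurable_one.indicator (hE i)]
        simp [lintegral_indicator_one (hE _)]
    _ = ∫⁻ x, (#{i | x ∈ E i} : ℝ≥0∞) ∂μ := by
        simp [Set.indicator_apply, sum_boole]
    _ ≤ ∫⁻ _, K ∂μ := lintegral_mono hK
    _ = K := by simp

lemma measurePreserving_equiv_of_measure_singleton {α : Type*} [MeasurableSpace α] [Countable α]
    [MeasurableSingletonClass α] {μ : Measure α} {c : ℝ≥0∞} (hμ : ∀ a, μ {a} = c) (e : α ≃ α) :
    MeasurePreserving e μ μ :=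
  ⟨measurable_of_countable e, Measure.ext_of_singleton fun a => by
    rw [Measure.map_apply (measurable_of_countable e) (measurableSet_singleton a),
      ← e.image_symm_eq_preimage, Set.image_singleton, hμ, hμ]⟩

section Score

variable {G X ι : Type*} [Fintype ι]

noncomputable def score (T : G → G → X → ℝ) (ε : X) (π : ι → G) (i : ι) : ℝ :=
  ∑ j, cmpWeight (T (π j) (π i) ε) (T (π i) (π j) ε)

lemma score_comp_equiv (T : G → G → X → ℝ) (ε : X) (π : ι → G) (e : ι ≃ ι) (i : ι) :
    score T ε (π ∘ e) i = score T ε π (e i) :=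
  e.sum_comp fun j => cmpWeight (T (π j) (π (e i)) ε) (T (π (e i)) (π j) ε)

end Score

variable {n B : ℕ}

def Transferable (T : Perm (Fin n) → Perm (Fin n) → (Fin n → ℝ) → ℝ) : Prop :=
  ∀ (π₁ π₂ σ : Perm (Fin n)) (ε : Fin n → ℝ), T π₁ π₂ (ε ∘ ⇑σ) = T (π₁ * σ⁻¹) (π₂ * σ⁻¹) ε

lemma score_comp_perm {ι : Type*} [Fintype ι] {T : Perm (Fin n) → Perm (Fin n) → (Fin n → ℝ) → ℝ}
    (hT : Transferable T)
    (ε : Fin n → ℝ) (π : ι → Perm (Fin n)) (σ : Perm (Fin n)) (i : ι) :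
    score T (ε ∘ ⇑σ) π i = score T ε (fun j => π j * σ⁻¹) i := by
  simp only [score, (hT · · σ ε)]

def relabelPerms (i : Fin B) (π : Fin B → Perm (Fin n)) : Fin B → Perm (Fin n) :=
  fun j => if j = i then (π i)⁻¹ else π j * (π i)⁻¹

lemma relabelPerms_involutive (i : Fin B) : Function.Involutive (relabelPerms (n := n) i) := by
  intro π
  funext j
  by_cases hj : j = i
  · simp [relabelPerms, hj]
  · simp [relabelPerms, hj, mul_assoc]

lemma cons_one_relabelPerms (i : Fin B) (π : Fin B → Perm (Fin n)) :
    (Fin.cons 1 (relabelPerms i π) : Fin (B + 1) → Perm (Fin n)) =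
      fun j => (Fin.cons 1 π : Fin (B + 1) → Perm (Fin n)) (swap 0 i.succ j) * (π i)⁻¹ := by
  funext j
  refine Fin.cases ?_ (fun k => ?_) j
  · simp
  · by_cases hk : k = i
    · simp [relabelPerms, hk]
    · rw [swap_apply_of_ne_of_ne (Fin.succ_ne_zero k) (fun h => hk (Fin.succ_injective _ h))]
      simp [relabelPerms, hk]

noncomputable abbrev uniformPerms (B n : ℕ) : Measure (Fin B → Perm (Fin n)) :=
  Measure.pi fun _ => (PMF.uniformOfFintype (Perm (Fin n))).toMeasure

lemma uniformPerms_singleton (π : Fin B → Perm (Fin n)) :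
    uniformPerms B n {π} = ((Fintype.card (Perm (Fin n)) : ℝ≥0∞)⁻¹) ^ B := by
  simp [PMF.toMeasure_apply_singleton _ _ (measurableSet_singleton _)]

def relabel (i : Fin B) (x : (Fin n → ℝ) × (Fin B → Perm (Fin n))) :
    (Fin n → ℝ) × (Fin B → Perm (Fin n)) :=
  (x.1 ∘ ⇑(x.2 i)⁻¹, relabelPerms i x.2)

lemma measurePreserving_relabel {ν : Measure (Fin n → ℝ)} [SFinite ν]
    (hν : ∀ σ : Perm (Fin n), ν.map (fun ε => ε ∘ ⇑σ) = ν) (i : Fin B) :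
    MeasurePreserving (relabel i) (ν.prod (uniformPerms B n)) (ν.prod (uniformPerms B n)) := by
  have hperms : MeasurePreserving (relabelPerms i) (uniformPerms B n) (uniformPerms B n) :=
    measurePreserving_equiv_of_measure_singleton uniformPerms_singleton
      (relabelPerms_involutive i).toPerm
  have hskew := hperms.skew_product (μc := ν) (g := fun π ε => ε ∘ ⇑(π i)⁻¹)
    (measurable_from_prod_countable_right fun π =>
      (measurable_pi_lambda _ fun k => measurable_pi_apply ((π i)⁻¹ k) :
        Measurable fun ε : Fin n → ℝ => ε ∘ ⇑(π i)⁻¹)) (ae_of_all _ fun π => hν _)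
  exact (Measure.measurePreserving_swap.comp hskew).comp Measure.measurePreserving_swap

-- The self-comparison `j = k` contributes `1 / 2` to the score, so `1 / 2 + score` plays the
-- role of `1 + ∑ ω_b`.
noncomputable def pValue (T : Perm (Fin n) → Perm (Fin n) → (Fin n → ℝ) → ℝ)
    (x : (Fin n → ℝ) × (Fin B → Perm (Fin n))) (k : Fin (B + 1)) : ℝ :=
  (1 / 2 + score T x.1 (Fin.cons 1 x.2 : Fin (B + 1) → Perm (Fin n)) k) / (B + 1)

variable {T : Perm (Fin n) → Perm (Fin n) → (Fin n → ℝ) → ℝ}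

lemma pValue_zero (x : (Fin n → ℝ) × (Fin B → Perm (Fin n))) :
    pValue T x 0 = (1 + ∑ b, cmpWeight (T (x.2 b) 1 x.1) (T 1 (x.2 b) x.1)) / (B + 1) := by
  simp only [pValue, score, Fin.sum_univ_succ, Fin.cons_zero, Fin.cons_succ, cmpWeight_self]
  ring

lemma pValue_relabel
    (hT : Transferable T) (i : Fin B) (x : (Fin n → ℝ) × (Fin B → Perm (Fin n))) :
    pValue T (relabel i x) 0 = pValue T x i.succ := by
  simp only [pValue, relabel, cons_one_relabelPerms, score_comp_perm hT, inv_inv,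
    inv_mul_cancel_right]
  rw [← Function.comp_def, score_comp_equiv, swap_apply_left]

lemma measurable_pValue (hTmeas : ∀ π₁ π₂, Measurable (T π₁ π₂)) (k : Fin (B + 1)) :
    Measurable fun x => pValue T x k := by
  refine measurable_from_prod_countable_left fun π => ?_
  simp only [pValue, score]
  exact ((Finset.measurable_sum _ fun _ _ => (hTmeas _ _).cmpWeight (hTmeas _ _)).const_add
    _).div_const _

lemma measure_pValue_le_eq {ν : Measure (Fin n → ℝ)} [IsProbabilityMeasure ν]
    (hTmeas : ∀ π₁ π₂, Measurable (T π₁ π₂)) (hT : Transferable T)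
    (hν : ∀ σ : Perm (Fin n), ν.map (fun ε => ε ∘ ⇑σ) = ν) (α : ℝ) (k : Fin (B + 1)) :
    ν.prod (uniformPerms B n) {x | pValue T x k ≤ α} =
      ν.prod (uniformPerms B n) {x | pValue T x 0 ≤ α} := by
  induction k using Fin.cases with
  | zero => rfl
  | succ i =>
    have hpre : {x | pValue T x i.succ ≤ α} = relabel i ⁻¹' {x | pValue T x 0 ≤ α} := by
      ext x
      simp [pValue_relabel hT]
    rw [hpre, (measurePreserving_relabel hν i).measure_preimage
      (measurableSet_le (measurable_pValue hTmeas 0) measurable_const).nullMeasurableSet]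

lemma card_pValue_le (x : (Fin n → ℝ) × (Fin B → Perm (Fin n))) (α : ℝ) :
    (#{k | pValue T x k ≤ α} : ℝ) ≤ max 0 (2 * ((B + 1) * α) - 1) := by
  have hfilter : univ.filter (fun k => pValue T x k ≤ α) = univ.filter fun k =>
      1 / 2 + score T x.1 (Fin.cons 1 x.2 : Fin (B + 1) → Perm (Fin n)) k ≤ (B + 1) * α :=
    filter_congr fun k _ => by rw [pValue, div_le_iff₀ (by positivity), mul_comm]
  rw [hfilter]
  exact card_filter_half_add_sum_le _ (fun _ _ => cmpWeight_nonneg _ _)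
    (fun _ _ => cmpWeight_add_swap _ _) _

/-- Main PALMRT guarantee: let T be a bivariate function of permutations (with noise parameter ε)
satisfying the transferability condition, let ε have exchangeable coordinates (law ν), and let
π_1,...,π_B be independent uniform permutations, independent of ε (product measure).  With
π₀ = id, T_{0b} = T(π₀, π_b; ε), T_{b0} = T(π_b, π₀; ε), ω_b = 1{T_{b0} > T_{0b}} +
(1/2)1{T_{b0} = T_{0b}} and p = (1 + Σ_b ω_b)/(B+1), we have P(p ≤ α) < 2α for every α > 0. -/
theorem stmt5 (n B : ℕ) (α : ℝ) (hα : 0 < α)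
    (T : Equiv.Perm (Fin n) → Equiv.Perm (Fin n) → (Fin n → ℝ) → ℝ)
    (hTmeas : ∀ π₁ π₂, Measurable (T π₁ π₂))
    (hT : ∀ (π₁ π₂ σ : Equiv.Perm (Fin n)) (ε : Fin n → ℝ),
      T π₁ π₂ (ε ∘ ⇑σ) = T (π₁ * σ⁻¹) (π₂ * σ⁻¹) ε)
    (ν : Measure (Fin n → ℝ)) [IsProbabilityMeasure ν]
    (hν : ∀ σ : Equiv.Perm (Fin n), ν.map (fun ε => ε ∘ ⇑σ) = ν) :
    (ν.prod (Measure.pi fun _ : Fin B =>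
        (PMF.uniformOfFintype (Equiv.Perm (Fin n))).toMeasure))
      {x | (1 + ∑ b, (if T (x.2 b) 1 x.1 > T 1 (x.2 b) x.1 then (1 : ℝ)
              else if T (x.2 b) 1 x.1 = T 1 (x.2 b) x.1 then 1 / 2 else 0)) / (B + 1) ≤ α}
      < ENNReal.ofReal (2 * α) := by
  have hsum : ∑ k : Fin (B + 1), ν.prod (uniformPerms B n) {x | pValue T x k ≤ α} ≤
      ENNReal.ofReal (max 0 (2 * ((B + 1) * α) - 1)) :=
    sum_measure_le_of_card_mem_le (fun k => measurableSet_le (measurable_pValue hTmeas k)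
      measurable_const) fun x => by
        rw [← ENNReal.ofReal_natCast]
        exact ENNReal.ofReal_le_ofReal (card_pValue_le x α)
  simp only [measure_pValue_le_eq hTmeas hT hν, sum_const, card_univ, Fintype.card_fin,
    nsmul_eq_mul] at hsum
  have hbound : ENNReal.ofReal (max 0 (2 * ((B + 1) * α) - 1)) <
      ((B + 1 : ℕ) : ℝ≥0∞) * ENNReal.ofReal (2 * α) := by
    rw [← ENNReal.ofReal_natCast, ← ENNReal.ofReal_mul (by positivity),
      ENNReal.ofReal_lt_ofReal_iff (by positivity)]
    push_cast
    exact max_lt (by positivity) (by linarith)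
  calc _ = ν.prod (uniformPerms B n) {x | pValue T x 0 ≤ α} := by
        congr 1
        ext x
        rw [Set.mem_ofPred_eq, Set.mem_ofPred_eq, pValue_zero]
        rfl
    _ < ENNReal.ofReal (2 * α) :=
        (ENNReal.mul_lt_mul_iff_right (by simp) (by simp)).1 (hsum.trans_lt hbound)
end

section
/- Let n = B + 1 and let W be an n×n matrix with W_{ll} = 1 and W_{lk} + W_{kl} = 1, W_{lk} ≥ 0 for l ≠ k. Suppose the row sums W_{0·}, ..., W_{B·} are exchangeable random variables (under some probability measure on matrices of this form). Then the random variable p = W_{0·}/(B+1) satisfies P(p ≤ α) < 2α for all α > 0, and this bound cannot in general be improved to α: there exist such matrices where nearly 2α(B+1) rows have row sums at most α(B+1). -/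
/-!
If `W` is a comparison matrix, the rows in a set `S` of rows with sums at most `t` already collect
`#S (#S + 1) / 2` among themselves, since each pair of distinct rows shares a total of `1` and each
diagonal entry is `1`; hence `#S ≤ 2t - 1`. Exchangeability makes every row equally likely to be
one of these rows, so `(B + 1) P(W_{0·} ≤ t) = E #S ≤ 2t - 1 < 2t`, which for `t = α (B + 1)` is
the bound. Conversely, a block of `m` rows that tie among themselves and score `0` against all
other rows has row sums `(m + 1) / 2`.
-/

open MeasureTheory Finset
open scoped ENNReal

section

variable {ι : Type*}

structure IsComparisonMatrix (M : Matrix ι ι ℝ) : Prop where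
  diag : ∀ l, M l l = 1
  add_transpose : ∀ l k, l ≠ k → M l k + M k l = 1
  nonneg : ∀ l k, 0 ≤ M l k

namespace IsComparisonMatrix

variable {M : Matrix ι ι ℝ}

theorem two_mul_sum_sum [DecidableEq ι] (hM : IsComparisonMatrix M) (S : Finset ι) :
    2 * ∑ l ∈ S, ∑ k ∈ S, M l k = (#S : ℝ) ^ 2 + #S := by
  have hpair : ∀ l k, M l k + M k l = 1 + if l = k then 1 else 0 := by
    intro l k
    by_cases hlk : l = k
    · subst hlk; simp [hM.diag]
    · simp [hlk, hM.add_transpose l k hlk]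
  calc 2 * ∑ l ∈ S, ∑ k ∈ S, M l k = ∑ l ∈ S, ∑ k ∈ S, (M l k + M k l) := by
        simp only [sum_add_distrib]
        rw [sum_comm (s := S) (f := fun l k => M k l), two_mul]
    _ = (#S : ℝ) ^ 2 + #S := by
        simp only [hpair, sum_add_distrib, sum_const, sum_ite_eq, nsmul_eq_mul]
        simp [sq]

theorem card_rowSum_le_le [Fintype ι] (hM : IsComparisonMatrix M) (t : ℝ) :
    (#{l | ∑ k, M l k ≤ t} : ℝ) ≤ max 0 (2 * t - 1) := by
  classical
  set S : Finset ι := {l | ∑ k, M l k ≤ t}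
  rcases S.eq_empty_or_nonempty with hS | hS
  · simp [hS]
  have hpos : (0 : ℝ) < #S := by exact_mod_cast hS.card_pos
  have hin : ∑ l ∈ S, ∑ k ∈ S, M l k ≤ ∑ l ∈ S, ∑ k, M l k :=
    sum_le_sum fun l _ => sum_le_sum_of_subset_of_nonneg (subset_univ S)
      fun k _ _ => hM.nonneg l k
  have hrows : ∑ l ∈ S, ∑ k, M l k ≤ #S * t := by
    simpa using sum_le_sum fun l (hl : l ∈ S) => (mem_filter.mp hl).2
  have := hM.two_mul_sum_sum S
  refine le_max_of_le_right ?_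
  nlinarith

end IsComparisonMatrix

section Construction

variable [DecidableEq ι]

/-- The rows in `T` score `0` against every row outside `T` and `1/2` against each other. -/
noncomputable def blockComparisonMatrix (T : Finset ι) : Matrix ι ι ℝ := fun l k =>
  (1 + (if k ∈ T then 1 else 0) - (if l ∈ T then 1 else 0) + (if l = k then 1 else 0)) / 2

theorem isComparisonMatrix_blockComparisonMatrix (T : Finset ι) :
    IsComparisonMatrix (blockComparisonMatrix T) where
  diag l := by simp [blockComparisonMatrix]
  add_transpose l k hlk := by
    simp only [blockComparisonMatrix, if_neg hlk, if_neg (Ne.symm hlk)]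
    ring
  nonneg l k := by
    simp only [blockComparisonMatrix]
    split_ifs <;> norm_num

theorem sum_blockComparisonMatrix_of_mem [Fintype ι] {T : Finset ι} {l : ι} (hl : l ∈ T) :
    ∑ k, blockComparisonMatrix T l k = (#T + 1) / 2 := by
  simp [blockComparisonMatrix, hl, ← sum_div, sum_add_distrib]

theorem exists_isComparisonMatrix_le_card_rowSum_le [Fintype ι] (m : ℕ) (hm : m ≤ Fintype.card ι) :
    ∃ M : Matrix ι ι ℝ, IsComparisonMatrix M ∧
      m ≤ #{l | ∑ k, M l k ≤ (m + 1) / 2} := by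
  obtain ⟨T, -, hT⟩ := exists_subset_card_eq (s := (univ : Finset ι)) (by simpa using hm)
  refine ⟨blockComparisonMatrix T, isComparisonMatrix_blockComparisonMatrix T, ?_⟩
  calc m = #T := hT.symm
    _ ≤ _ := card_le_card fun l hl => by
      simp [sum_blockComparisonMatrix_of_mem hl, hT]

theorem exists_isComparisonMatrix_two_mul_sub_two_le_card_rowSum_le [Fintype ι] {t : ℝ}
    (ht : 2 * t - 1 ≤ Fintype.card ι) :
    ∃ M : Matrix ι ι ℝ, IsComparisonMatrix M ∧ 2 * t - 2 ≤ #{l | ∑ k, M l k ≤ t} := by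
  obtain ⟨M, hM, hcard⟩ :=
    exists_isComparisonMatrix_le_card_rowSum_le ⌊2 * t - 1⌋₊ (Nat.floor_le_of_le ht)
  refine ⟨M, hM, ?_⟩
  rcases lt_or_ge (2 * t - 1) 0 with hneg | hnonneg
  · linarith [(#{l | ∑ k, M l k ≤ t}).cast_nonneg (α := ℝ)]
  have hfloor := Nat.floor_le hnonneg
  calc 2 * t - 2 ≤ ⌊2 * t - 1⌋₊ := by linarith [Nat.sub_one_lt_floor (2 * t - 1)]
    _ ≤ #{l | ∑ k, M l k ≤ (⌊2 * t - 1⌋₊ + 1) / 2} := by exact_mod_cast hcard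
    _ ≤ #{l | ∑ k, M l k ≤ t} := by
      gcongr
      linarith

end Construction

section Exchangeable

variable {Ω E : Type*} [MeasurableSpace Ω] [MeasurableSpace E] {μ : Measure Ω}
  {X : Ω → ι → E}

theorem measure_eval_mem_eq_of_exchangeable [DecidableEq ι] (hX : Measurable X)
    (hexch : ∀ σ : Equiv.Perm ι, μ.map (fun ω l => X ω (σ l)) = μ.map X)
    {s : Set E} (hs : MeasurableSet s) (i j : ι) :
    μ {ω | X ω i ∈ s} = μ {ω | X ω j ∈ s} := by
  have hset : MeasurableSet {x : ι → E | x i ∈ s} := measurable_pi_apply i hs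
  have hXσ : Measurable fun ω l => X ω (Equiv.swap i j l) :=
    measurable_pi_lambda _ fun l => measurable_pi_apply _ |>.comp hX
  have := congrArg (· {x : ι → E | x i ∈ s}) (hexch (Equiv.swap i j))
  simp only [Measure.map_apply hXσ hset, Measure.map_apply hX hset] at this
  simpa using this.symm

open Classical in
theorem sum_measure_eq_lintegral_card [Fintype ι] (A : ι → Set Ω) (hA : ∀ l, MeasurableSet (A l)) :
    ∑ l, μ (A l) = ∫⁻ ω, (#{l | ω ∈ A l} : ℝ≥0∞) ∂μ := by
  have hcard : ∀ ω, (#{l | ω ∈ A l} : ℝ≥0∞) = ∑ l, (A l).indicator 1 ω := fun ω => by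
    simp [Set.indicator_apply]
  simp_rw [hcard]
  rw [lintegral_finsetSum _ fun l _ => measurable_one.indicator (hA l)]
  simp [lintegral_indicator_one (hA _)]

open Classical in
theorem card_mul_measure_le_of_exchangeable [Fintype ι] [DecidableEq ι] (hX : Measurable X)
    (hexch : ∀ σ : Equiv.Perm ι, μ.map (fun ω l => X ω (σ l)) = μ.map X)
    {s : Set E} (hs : MeasurableSet s) {c : ℝ≥0∞}
    (hc : ∀ ω, (#{l | X ω l ∈ s} : ℝ≥0∞) ≤ c) (i : ι) :
    Fintype.card ι * μ {ω | X ω i ∈ s} ≤ c * μ Set.univ := by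
  have hA : ∀ l, MeasurableSet {ω | X ω l ∈ s} := fun l => (measurable_pi_apply l).comp hX hs
  calc Fintype.card ι * μ {ω | X ω i ∈ s} = ∑ l, μ {ω | X ω l ∈ s} := by
        simp [measure_eval_mem_eq_of_exchangeable hX hexch hs _ i]
    _ = ∫⁻ ω, (#{l | X ω l ∈ s} : ℝ≥0∞) ∂μ := sum_measure_eq_lintegral_card _ hA
    _ ≤ ∫⁻ _, c ∂μ := lintegral_mono hc
    _ = c * μ Set.univ := lintegral_const c

theorem card_mul_measure_rowSum_le_lt [Fintype ι] [DecidableEq ι] [IsProbabilityMeasure μ]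
    {W : Ω → Matrix ι ι ℝ} (hW : ∀ ω, IsComparisonMatrix (W ω))
    (hX : Measurable fun ω l => ∑ k, W ω l k)
    (hexch : ∀ σ : Equiv.Perm ι,
      μ.map (fun ω l => ∑ k, W ω (σ l) k) = μ.map (fun ω l => ∑ k, W ω l k))
    {t : ℝ} (ht : 0 < t) (i : ι) :
    Fintype.card ι * μ {ω | ∑ k, W ω i k ≤ t} < ENNReal.ofReal (2 * t) := by
  have hrows (ω : Ω) : (#{l | ∑ k, W ω l k ∈ Set.Iic t} : ℝ≥0∞) ≤
      ENNReal.ofReal (max 0 (2 * t - 1)) := by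
    rw [← ENNReal.ofReal_natCast]
    exact ENNReal.ofReal_le_ofReal (by convert (hW ω).card_rowSum_le_le t; exact Set.mem_Iic)
  have key := card_mul_measure_le_of_exchangeable hX hexch measurableSet_Iic hrows i
  rw [measure_univ, mul_one] at key
  exact key.trans_lt <|
    (ENNReal.ofReal_lt_ofReal_iff (by positivity)).2 (max_lt (by positivity) (by linarith))

end Exchangeable

end

/-- For a random (B+1)×(B+1) comparison matrix W (diagonal 1, W_{lk} + W_{kl} = 1 off-diagonal,
nonnegative entries) with exchangeable row sums, the p-value p = W_{0·}/(B+1) satisfies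
P(p ≤ α) < 2α for all α > 0; and this bound cannot in general be improved to α: for any
0 < α ≤ 1/2 there exists such a (deterministic) matrix where nearly 2α(B+1) rows (at least
2α(B+1) − 2 of them) have row sums at most α(B+1). -/
theorem stmt19 (B : ℕ) {Ω : Type*} [MeasurableSpace Ω] (μ : Measure Ω)
    [IsProbabilityMeasure μ]
    (W : Ω → Matrix (Fin (B + 1)) (Fin (B + 1)) ℝ)
    (hdiag : ∀ ω l, W ω l l = 1)
    (hskew : ∀ ω l k, l ≠ k → W ω l k + W ω k l = 1)
    (hpos : ∀ ω l k, 0 ≤ W ω l k)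
    (hmeas : ∀ l k, Measurable (fun ω => W ω l k))
    (hexch : ∀ ζ : Equiv.Perm (Fin (B + 1)),
      μ.map (fun ω => fun l => ∑ k, W ω (ζ l) k) = μ.map (fun ω => fun l => ∑ k, W ω l k)) :
    (∀ α : ℝ, 0 < α →
      μ {ω | (∑ k, W ω 0 k) / (B + 1) ≤ α} < ENNReal.ofReal (2 * α)) ∧
    (∀ α : ℝ, 0 < α → α ≤ 1 / 2 →
      ∃ W₀ : Matrix (Fin (B + 1)) (Fin (B + 1)) ℝ,
        (∀ l, W₀ l l = 1) ∧ (∀ l k, l ≠ k → W₀ l k + W₀ k l = 1) ∧ (∀ l k, 0 ≤ W₀ l k) ∧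
        2 * α * (B + 1) - 2 ≤
          ((Finset.univ.filter (fun l => ∑ k, W₀ l k ≤ α * (B + 1))).card : ℝ)) := by
  have hW : ∀ ω, IsComparisonMatrix (W ω) := fun ω => ⟨hdiag ω, hskew ω, hpos ω⟩
  have hX : Measurable fun ω l => ∑ k, W ω l k :=
    measurable_pi_lambda _ fun l => Finset.measurable_sum _ fun k _ => hmeas l k
  refine ⟨fun α hα => ?_, fun α _ hα₂ => ?_⟩
  · have key := card_mul_measure_rowSum_le_lt hW hX hexch (t := α * (B + 1)) (by positivity) 0
    simp_rw [div_le_iff₀ (by positivity : (0 : ℝ) < B + 1)]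
    refine (ENNReal.mul_lt_mul_iff_right (by simp) (by simp)).mp (key.trans_eq ?_)
    rw [Fintype.card_fin, ← ENNReal.ofReal_natCast, ← ENNReal.ofReal_mul (by positivity)]
    push_cast
    ring_nf
  · obtain ⟨M, hM, hcard⟩ := exists_isComparisonMatrix_two_mul_sub_two_le_card_rowSum_le (ι := Fin (B + 1))
      (t := α * (B + 1)) (by rw [Fintype.card_fin]; push_cast; nlinarith)
    exact ⟨M, hM.diag, hM.add_transpose, hM.nonneg, by linarith⟩
end
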